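/- Let A and B be unital C*-algebras and T₀ : A → B a surjective real-linear isometry with T₀(1_A) = 1_B that satisfies T₀(a b* c + c b* a) = T₀(a) T₀(b)* T₀(c) + T₀(c) T₀(b)* T₀(a) for all a, b, c ∈ A. Then there exist a central projection P in B and a surjective Jordan *-isomorphism J : A → B such that T₀(a) = P·J(a) + (1_B − P)·J(a)* for all a ∈ A. -/
import Mathlib

private lemma smul_decomp {M : Type*} [AddCommGroup M] [Module ℂ M] [Module ℝ M]
    [IsScalarTower ℝ ℂ M] (c : ℂ) (x : M) :
    c • x = (c.re : ℝ) • x + (c.im : ℝ) • (Complex.I • x) := by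
  rw [← algebraMap_smul ℂ c.re x, ← algebraMap_smul ℂ c.im (Complex.I • x), smul_smul,
    ← add_smul]
  congr 1
  simp [Complex.ext_iff]

theorem stmtN
    {A B : Type*}
    [NormedRing A] [StarRing A] [CStarRing A] [NormedAlgebra ℂ A]
    [CompleteSpace A] [StarModule ℂ A]
    [NormedRing B] [StarRing B] [CStarRing B] [NormedAlgebra ℂ B]
    [CompleteSpace B] [StarModule ℂ B]
    (T₀ : A →ₗ[ℝ] B)
    (hsurj : Function.Surjective T₀)
    (hiso : Isometry T₀)
    (hone : T₀ 1 = 1)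
    (htriple : ∀ a b c : A,
      T₀ (a * star b * c + c * star b * a)
        = T₀ a * star (T₀ b) * T₀ c + T₀ c * star (T₀ b) * T₀ a) :
    ∃ (P : B) (J : A →ₗ[ℂ] B),
      (P * P = P ∧ star P = P ∧ ∀ b : B, P * b = b * P) ∧
      Function.Bijective J ∧
      (∀ a : A, J (a * a) = J a * J a) ∧
      (∀ a : A, J (star a) = star (J a)) ∧
      ∀ a : A, T₀ a = P * J a + (1 - P) * star (J a) := by
  have half : ∀ x y : B, x + x = y + y → x = y := by
    intro x y h
    have h2 : (2:ℝ) • x = (2:ℝ) • y := by rw [two_smul, two_smul]; exact h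
    exact smul_right_injective B two_ne_zero h2
  have hstar : ∀ a : A, T₀ (star a) = star (T₀ a) := by
    intro a
    have h := htriple 1 a 1
    simp only [one_mul, mul_one, hone] at h
    rw [map_add] at h
    exact half _ _ h
  have hJ : ∀ a c : A, T₀ (a*c + c*a) = T₀ a * T₀ c + T₀ c * T₀ a := by
    intro a c
    have h := htriple a 1 c
    simpa only [star_one, mul_one, hone] using h
  have hsq : ∀ a : A, T₀ (a*a) = T₀ a * T₀ a := by
    intro a
    have h := hJ a a
    rw [map_add] at h
    exact half _ _ h
  set e : B := T₀ (Complex.I • 1) with he_def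
  have he2 : e * e = -1 := by
    have h := hsq (Complex.I • 1)
    rw [smul_mul_assoc, one_mul, smul_smul, Complex.I_mul_I, neg_smul, one_smul,
      map_neg, hone] at h
    exact h.symm
  have hse : star e = -e := by
    rw [he_def, ← hstar, ← map_neg]
    congr 1
    rw [star_smul, star_one, Complex.star_def, Complex.conj_I, neg_smul]
  have hIa : ∀ a : A, T₀ (Complex.I • a) + T₀ (Complex.I • a) = e * T₀ a + T₀ a * e := by
    intro a
    have h := hJ (Complex.I • 1) a
    rw [smul_mul_assoc, one_mul, mul_smul_comm, mul_one, map_add] at h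
    exact h
  have hcomm : ∀ x y : B, x * (e*y - y*e) = (e*y - y*e) * x := by
    intro x y
    obtain ⟨a, rfl⟩ := hsurj x
    obtain ⟨b, rfl⟩ := hsurj y
    have h1 := hJ (Complex.I • a) b
    have harg : (Complex.I • a)*b + b*(Complex.I • a) = Complex.I • (a*b + b*a) := by
      rw [smul_mul_assoc, mul_smul_comm, smul_add]
    rw [harg] at h1
    have h2 := hIa (a*b + b*a)
    rw [h1, hJ a b] at h2
    have h3 := hIa a
    have key : (e * T₀ a + T₀ a * e) * T₀ b + T₀ b * (e * T₀ a + T₀ a * e)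
        = e*(T₀ a * T₀ b + T₀ b * T₀ a) + (T₀ a * T₀ b + T₀ b * T₀ a)*e := by
      rw [← h3, add_mul, mul_add, ← h2]
      abel
    have hfin : T₀ a * (e * T₀ b - T₀ b * e) - (e * T₀ b - T₀ b * e) * T₀ a
        = ((e * T₀ a + T₀ a * e) * T₀ b + T₀ b * (e * T₀ a + T₀ a * e))
          - (e*(T₀ a * T₀ b + T₀ b * T₀ a) + (T₀ a * T₀ b + T₀ b * T₀ a)*e) := by
      noncomm_ring
    rw [key, sub_self] at hfin
    exact sub_eq_zero.mp hfin
  have heye : ∀ y : B, e*y*e + y = 0 := by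
    intro y
    have h1 := hcomm e y
    have hid : (e*y*e + y) + (e*y*e + y)
        = ((e*y - y*e)*e - e*(e*y - y*e)) + ((e*e + 1)*y + y*(e*e + 1)) := by
      noncomm_ring
    rw [h1, sub_self, he2, neg_add_cancel, zero_mul, mul_zero, add_zero, zero_add] at hid
    exact half _ _ (by rw [hid, add_zero])
  have hec : ∀ y : B, e * y = y * e := by
    intro y
    have h3 : e*y - y*e = e*(e*y*e + y) - (e*e + 1)*(y*e) := by noncomm_ring
    rw [heye y, he2, neg_add_cancel, mul_zero, zero_mul, sub_zero] at h3
    exact sub_eq_zero.mp h3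
  have hTI : ∀ a : A, T₀ (Complex.I • a) = e * T₀ a := by
    intro a
    have h := hIa a
    rw [← hec (T₀ a)] at h
    exact half _ _ h
  set v : B := Complex.I • e with hv_def
  have hv2 : v * v = 1 := by
    rw [hv_def, smul_mul_assoc, mul_smul_comm, smul_smul, Complex.I_mul_I, he2,
      neg_smul, one_smul, neg_neg]
  have hvs : star v = v := by
    rw [hv_def, star_smul, Complex.star_def, Complex.conj_I, hse, neg_smul, smul_neg, neg_neg]
  have hvc : ∀ b : B, v * b = b * v := by
    intro b
    rw [hv_def, smul_mul_assoc, hec, mul_smul_comm]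
  set P : B := (2⁻¹ : ℂ) • (1 - v) with hP_def
  have hPc : ∀ b : B, P * b = b * P := by
    intro b
    rw [hP_def, smul_mul_assoc, mul_smul_comm, sub_mul, mul_sub, one_mul, mul_one, hvc]
  have hP2 : P * P = P := by
    have hgen : ∀ w : B, (1-w)*(1-w) = ((1-w) + (1-w)) + (w*w - 1) := by
      intro w; noncomm_ring
    calc P*P = (2⁻¹:ℂ) • ((2⁻¹:ℂ) • ((1-v)*(1-v))) := by
          rw [hP_def, smul_mul_assoc, mul_smul_comm]
      _ = (2⁻¹:ℂ) • ((2⁻¹:ℂ) • ((1-v) + (1-v))) := by rw [hgen, hv2, sub_self, add_zero]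
      _ = P := by rw [hP_def]; module
  have hPs : star P = P := by
    have h2 : star ((2:ℂ)⁻¹) = (2:ℂ)⁻¹ := by simp
    rw [hP_def, star_smul, star_sub, star_one, hvs, h2]
  set Q : B := 1 - P with hQ_def
  have hPQ1 : P + Q = 1 := by rw [hQ_def]; abel
  have hPQ : P * Q = 0 := by rw [hQ_def, mul_sub, mul_one, hP2, sub_self]
  have hQP : Q * P = 0 := by rw [hQ_def, sub_mul, one_mul, hP2, sub_self]
  have hQ2 : Q * Q = Q := by rw [hQ_def, mul_sub, mul_one, ← hQ_def, hQP, sub_zero]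
  have hQs : star Q = Q := by rw [hQ_def, star_sub, star_one, hPs]
  have hQc : ∀ b : B, Q * b = b * Q := by
    intro b
    rw [hQ_def, sub_mul, mul_sub, one_mul, mul_one, hPc]
  have hc2 : ∀ (S : B), (∀ b : B, S*b = b*S) → ∀ R x y : B, (R*x)*(S*y) = (R*S)*(x*y) := by
    intro S hS R x y
    rw [mul_assoc R x, ← mul_assoc x S, ← hS x, mul_assoc S x, ← mul_assoc R S]
  -- the conjugation map g
  have hstar_g : ∀ x : B, star (P * x + Q * star x) = P * star x + Q * x := by
    intro x
    rw [star_add, star_mul, star_mul, hPs, hQs, star_star, ← hPc, ← hQc]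
  have hgg : ∀ x : B, P * (P * x + Q * star x) + Q * star (P * x + Q * star x) = x := by
    intro x
    rw [hstar_g, mul_add, mul_add, ← mul_assoc, ← mul_assoc, ← mul_assoc, ← mul_assoc,
      hP2, hPQ, hQP, hQ2]
    simp only [zero_mul, add_zero, zero_add]
    rw [← add_mul, hPQ1, one_mul]
  have hmulg : ∀ x y : B, (P * x + Q * star x) * (P * y + Q * star y)
      = P * (x * y) + Q * (star x * star y) := by
    intro x y
    rw [add_mul, mul_add, mul_add, hc2 P hPc, hc2 Q hQc, hc2 P hPc, hc2 Q hQc,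
      hP2, hPQ, hQP, hQ2, zero_mul, zero_mul, add_zero, zero_add]
  -- key smul facts
  have hIP : Complex.I • P = (2⁻¹:ℂ) • (e + Complex.I • (1:B)) := by
    have hIv : Complex.I • v = -e := by
      rw [hv_def, smul_smul, Complex.I_mul_I, neg_smul, one_smul]
    rw [hP_def, smul_smul, mul_comm, ← smul_smul, smul_sub, hIv]
    module
  have hPe : P * e = Complex.I • P := by
    have hve : v * e = -(Complex.I • (1:B)) := by
      rw [hv_def, smul_mul_assoc, he2, smul_neg]
    rw [hP_def, smul_mul_assoc, sub_mul, one_mul, hve, hIP]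
    module
  have hQe : Q * e = -(Complex.I • Q) := by
    have h2IP : Complex.I • P + Complex.I • P = e + Complex.I • (1:B) := by
      rw [hIP, ← add_smul]
      norm_num
    rw [hQ_def, sub_mul, one_mul, hPe, smul_sub, neg_sub, sub_eq_sub_iff_add_eq_add]
    exact h2IP.symm
  -- the candidate J as a function
  have hJadd : ∀ a b : A, (P * T₀ (a + b) + Q * star (T₀ (a + b)))
      = (P * T₀ a + Q * star (T₀ a)) + (P * T₀ b + Q * star (T₀ b)) := by
    intro a b
    rw [map_add, star_add, mul_add, mul_add]
    abel
  have hJI : ∀ a : A, P * T₀ (Complex.I • a) + Q * star (T₀ (Complex.I • a))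
      = Complex.I • (P * T₀ a + Q * star (T₀ a)) := by
    intro a
    rw [hTI a, star_mul, hse, mul_neg, mul_neg, ← hec, ← mul_assoc, ← mul_assoc,
      hPe, hQe, neg_mul, neg_neg]
    simp only [smul_mul_assoc, smul_add]
  have hJr : ∀ (r : ℝ) (a : A), P * T₀ (r • a) + Q * star (T₀ (r • a))
      = r • (P * T₀ a + Q * star (T₀ a)) := by
    intro r a
    have hr : ∀ y : B, (r:ℝ) • y = ((r:ℂ)) • y := by
      intro y
      rw [← algebraMap_smul ℂ r y, Complex.coe_algebraMap]
    rw [map_smul, hr, star_smul, Complex.star_def, Complex.conj_ofReal,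
      mul_smul_comm, mul_smul_comm, ← smul_add, ← hr]
  have hJsmul : ∀ (c : ℂ) (a : A), P * T₀ (c • a) + Q * star (T₀ (c • a))
      = c • (P * T₀ a + Q * star (T₀ a)) := by
    intro c a
    rw [smul_decomp c a, hJadd, hJr, hJr, hJI, smul_decomp c (P * T₀ a + Q * star (T₀ a))]
  set J : A →ₗ[ℂ] B :=
    { toFun := fun a => P * T₀ a + Q * star (T₀ a),
      map_add' := hJadd,
      map_smul' := hJsmul } with hJ_def
  have hJap : ∀ a : A, J a = P * T₀ a + Q * star (T₀ a) := fun a => rfl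
  refine ⟨P, J, ⟨hP2, hPs, hPc⟩, ⟨?_, ?_⟩, ?_, ?_, ?_⟩
  · intro a b h
    rw [hJap, hJap] at h
    have := congrArg (fun x => P * x + Q * star x) h
    simp only [hgg] at this
    exact hiso.injective this
  · intro b
    obtain ⟨a, ha⟩ := hsurj (P * b + Q * star b)
    refine ⟨a, ?_⟩
    rw [hJap, ha, hgg]
  · intro a
    rw [hJap, hJap, hmulg, hsq, star_mul]
  · intro a
    rw [hJap, hJap, hstar a, hstar_g, star_star]
  · intro a
    rw [hJap]
    exact (hgg (T₀ a)).symm
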